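/- Let E be a reproducing kernel Hilbert C*-module over a unital C*-algebra A on a set S with reproducing kernel K, and let s_0 ∈ S be such that K(s_0,s_0) is invertible in A. Then the map P(f) = k_{s_0}·⟨k_{s_0}, k_{s_0}⟩^{-1}·⟨k_{s_0}, f⟩ is the orthogonal projection of E onto the A-linear span k_{s_0}A, and the submodule E_0 = { f ∈ E : f(s_0) = 0 } equals (k_{s_0}A)^⊥; in particular E_0 is orthogonally complemented in E, with E = k_{s_0}A ⊕ E_0. -/

import Mathlib

open scoped RightActions

/-- The Hilbert C⋆-module class as it stood in Mathlib (December 2024): right `A`-module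
structure via `Aᵐᵒᵖ`, inner product `A`-linear on the right. (Mathlib's `CStarModule` now
uses a left action `SMul A E` with `⟪x, a • y⟫ = a * ⟪x, y⟫`.) -/
class RightCStarModule (A E : Type*) [NonUnitalSemiring A] [StarRing A]
    [Module ℂ A] [AddCommGroup E] [Module ℂ E] [PartialOrder A] [SMul Aᵐᵒᵖ E] [Norm A] [Norm E]
    extends Inner A E where
  inner_add_right {x} {y} {z} : inner x (y + z) = inner x y + inner x z
  inner_self_nonneg {x} : 0 ≤ inner x x
  inner_self {x} : inner x x = 0 ↔ x = 0
  inner_op_smul_right {a : A} {x y : E} : inner x (y <• a) = inner x y * a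
  inner_smul_right_complex {z : ℂ} {x} {y} : inner x (z • y) = z • inner x y
  star_inner x y : star (inner x y) = inner y x
  norm_eq_sqrt_norm_inner_self x : ‖x‖ = √‖inner x x‖

/-- A *reproducing kernel Hilbert C*-module* (RKHC*M) over the C*-algebra `A` on the set `S`:
a Hilbert C*-module `E` over `A` realized (injectively) as a right `A`-submodule of the
`A`-valued functions on `S` via `toFun`, together with kernel elements `k s` such that
evaluation at `s` is given by `f ↦ ⟪k s, f⟫`, and such that the `A`-linear span of the
`k s` is dense in `E`. -/
structure RKHCM (A : Type*) (S : Type*) (E : Type*)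
    [CStarAlgebra A] [PartialOrder A] [StarOrderedRing A]
    [NormedAddCommGroup E] [NormedSpace ℂ E] [SMul Aᵐᵒᵖ E] [RightCStarModule A E] where
  toFun : E → S → A
  injective : Function.Injective toFun
  k : S → E
  eval_eq : ∀ (f : E) (s : S), toFun f s = inner A (k s) f
  dense_span : Dense
    ((Submodule.span ℂ (Set.range fun p : S × A => k p.1 <• p.2) : Submodule ℂ E) : Set E)

variable {A : Type*} [CStarAlgebra A] [PartialOrder A] [StarOrderedRing A]
variable {S : Type*} [Nonempty S]
variable {E : Type*} [NormedAddCommGroup E] [NormedSpace ℂ E] [SMul Aᵐᵒᵖ E]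
  [RightCStarModule A E] [CompleteSpace E]

namespace RightCStarModule

variable {A E : Type*} [Ring A] [StarRing A] [Module ℂ A] [PartialOrder A] [AddCommGroup E]
  [Module ℂ E] [SMul Aᵐᵒᵖ E] [Norm A] [Norm E] [RightCStarModule A E]

theorem inner_op_smul_left (a : A) (x y : E) :
    (inner A (x <• a) y : A) = star a * inner A x y := by
  rw [← star_inner y, inner_op_smul_right, star_mul, star_inner]

theorem inner_sub_right (x y z : E) : (inner A x (y - z) : A) = inner A x y - inner A x z := by
  rw [eq_sub_iff_add_eq, ← inner_add_right, sub_add_cancel]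

theorem isSelfAdjoint_inner_self (x : E) : IsSelfAdjoint (inner A x x : A) :=
  star_inner x x

theorem inner_eq_zero_iff_forall_inner_op_smul_left (x f : E) :
    (inner A x f : A) = 0 ↔ ∀ a : A, (inner A (x <• a) f : A) = 0 := by
  simp_rw [inner_op_smul_left]
  refine ⟨fun h a => by rw [h, mul_zero], fun h => ?_⟩
  simpa using h 1

variable (A) in
/-- For `⟪x, x⟫` invertible, the orthogonal projection onto the cyclic submodule `x A`. -/
noncomputable def projSingleton (x f : E) : E :=
  x <• (Ring.inverse (inner A x x : A) * inner A x f)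

variable {x : E}

theorem inner_projSingleton_left_eq_right (f g : E) :
    (inner A (projSingleton A x f) g : A) = inner A f (projSingleton A x g) := by
  rw [projSingleton, projSingleton, inner_op_smul_left, inner_op_smul_right, star_mul,
    (isSelfAdjoint_inner_self x).ringInverse.star_eq, star_inner, mul_assoc]

variable (hx : IsUnit (inner A x x : A))
include hx

theorem projSingleton_op_smul (a : A) : projSingleton A x (x <• a) = x <• a := by
  rw [projSingleton, inner_op_smul_right, ← mul_assoc, Ring.inverse_mul_cancel _ hx, one_mul]

theorem projSingleton_projSingleton (f : E) :
    projSingleton A x (projSingleton A x f) = projSingleton A x f :=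
  projSingleton_op_smul hx _

theorem inner_sub_projSingleton (f : E) : (inner A x (f - projSingleton A x f) : A) = 0 := by
  rw [inner_sub_right, projSingleton, inner_op_smul_right, ← mul_assoc,
    Ring.mul_inverse_cancel _ hx, one_mul, sub_self]

end RightCStarModule

open RightCStarModule

/-- if `K(s₀,s₀) = ⟪k s₀, k s₀⟫` is invertible, then
`P f = k s₀ <• (⟪k s₀, k s₀⟫⁻¹ * ⟪k s₀, f⟫)` is the orthogonal projection onto the
`A`-linear span `k s₀ • A` (it is idempotent, self-adjoint, has range inside `k s₀ • A`
and fixes it), the submodule `E₀ = {f | f(s₀) = 0}` equals the orthogonal complement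
`(k s₀ • A)ᗮ`, and every `f` decomposes as `f = P f + (f - P f)` with `f - P f ∈ E₀`;
in particular `E = k s₀ • A ⊕ E₀`. -/
theorem projection_onto_span_kernel_elt_and_orthogonal_complement
    (R : RKHCM A S E) (s₀ : S) (hs₀ : IsUnit (inner A (R.k s₀) (R.k s₀) : A))
    (P : E → E)
    (hP : ∀ f, P f =
      R.k s₀ <• (Ring.inverse (inner A (R.k s₀) (R.k s₀) : A) * inner A (R.k s₀) f)) :
    (∀ f, P (P f) = P f) ∧
    (∀ f g, (inner A (P f) g : A) = inner A f (P g)) ∧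
    (∀ f, ∃ a : A, P f = R.k s₀ <• a) ∧
    (∀ a : A, P (R.k s₀ <• a) = R.k s₀ <• a) ∧
    ({f : E | R.toFun f s₀ = 0} =
      {f : E | ∀ a : A, (inner A (R.k s₀ <• a) f : A) = 0}) ∧
    (∀ f : E, R.toFun (f - P f) s₀ = 0) := by
  obtain rfl : P = projSingleton A (R.k s₀) := funext hP
  refine ⟨projSingleton_projSingleton hs₀, inner_projSingleton_left_eq_right,
    fun f => ⟨_, rfl⟩, projSingleton_op_smul hs₀, ?_, fun f => ?_⟩
  · ext f
    rw [Set.mem_ofPred_eq, R.eval_eq]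
    exact inner_eq_zero_iff_forall_inner_op_smul_left _ _
  · rw [R.eval_eq]
    exact inner_sub_projSingleton hs₀ f
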